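/- Under the hypotheses f_C2 = (Q+ρ)·f_C1, Δf2 = Q·Δf1, T^b = 1/Δf^b + T_s^b, and T_s^b = N_s^b·T_ofdm^b/N_b with T_ofdm^b = 1/Δf^b, the equality f_C1·T^1 = f_C2·T^2 holds if and only if N_s^1 = ((Q+ρ)/Q)·(N_1/N_2)·N_s^2 + N_1·ρ/Q, for positive reals N_1, N_2, N_s^2, Q and 0 ≤ ρ < 1. -/
import Mathlib


/-- CP sample-length relation equivalent to phase-coherent symbol durations across bands. -/
theorem stmt_1 (fC1 fC2 Δf1 Δf2 N1 N2 Ns1 Ns2 Tofdm1 Tofdm2 Ts1 Ts2 T1 T2 Q ρ : ℝ)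
    (hQ : 0 < Q) (hρ0 : 0 ≤ ρ) (hρ1 : ρ < 1)
    (hN1 : 0 < N1) (hN2 : 0 < N2) (hNs2 : 0 ≤ Ns2)
    (hfC1 : 0 < fC1) (hΔf1 : 0 < Δf1) (hΔf2 : 0 < Δf2)
    (hfC : fC2 = (Q + ρ) * fC1)
    (hΔf : Δf2 = Q * Δf1)
    (hTofdm1 : Tofdm1 = 1 / Δf1) (hTofdm2 : Tofdm2 = 1 / Δf2)
    (hTs1 : Ts1 = Ns1 * Tofdm1 / N1) (hTs2 : Ts2 = Ns2 * Tofdm2 / N2)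
    (hT1 : T1 = Tofdm1 + Ts1) (hT2 : T2 = Tofdm2 + Ts2) :
    fC1 * T1 = fC2 * T2 ↔ Ns1 = ((Q + ρ) / Q) * (N1 / N2) * Ns2 + N1 * ρ / Q := by
  subst hfC hΔf hTofdm1 hTofdm2 hTs1 hTs2 hT1 hT2
  have h1 : Δf1 ≠ 0 := hΔf1.ne'
  have h2 : N1 ≠ 0 := hN1.ne'
  have h3 : N2 ≠ 0 := hN2.ne'
  have h4 : Q ≠ 0 := hQ.ne'
  have h5 : fC1 ≠ 0 := hfC1.ne'
  field_simp
  constructor <;> intro h <;> nlinarith [h, mul_pos hN1 hN2, mul_pos hΔf1 hQ, mul_pos hfC1 hΔf1]
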